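/- arXiv:math/0204171 — 2 statements merged into one kernel-verified Lean document; each statement's English description precedes it below -/
import Mathlib

section
/- Let n ≥ 2 and d > 0. If points a, c₁,...,cₙ, b ∈ ℂⁿ satisfy φₙ(a,cᵢ) = φₙ(b,cᵢ) = d² for all i, φₙ(cᵢ,cⱼ) = d² for all i < j, and φₙ(a,b) = 0, then a = b. -/
noncomputable def phi (n : ℕ) (x y : Fin n → ℂ) : ℂ := ∑ i, (x i - y i) ^ 2

open Finset Matrix

lemma phi_symm (n : ℕ) (x y : Fin n → ℂ) : phi n x y = phi n y x := by
  unfold phi; apply Finset.sum_congr rfl; intros; ring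

lemma phi_self (n : ℕ) (x : Fin n → ℂ) : phi n x x = 0 := by
  simp [phi]

lemma master (n : ℕ) (x y z w : Fin n → ℂ) :
    phi n x w + phi n y z - phi n x z - phi n y w
      = 2 * ∑ k, (x k - y k) * (z k - w k) := by
  unfold phi
  rw [Finset.mul_sum, ← Finset.sum_add_distrib, ← Finset.sum_sub_distrib,
      ← Finset.sum_sub_distrib]
  apply Finset.sum_congr rfl; intros; ring

theorem stmt15 (n : ℕ) (hn : 2 ≤ n) (d : ℝ) (hd : 0 < d)
    (a b : Fin n → ℂ) (c : Fin n → (Fin n → ℂ))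
    (h1 : ∀ i, phi n a (c i) = (d : ℂ) ^ 2)
    (h2 : ∀ i, phi n b (c i) = (d : ℂ) ^ 2)
    (h3 : ∀ i j : Fin n, i < j → phi n (c i) (c j) = (d : ℂ) ^ 2)
    (h4 : phi n a b = 0) : a = b := by
  haveI : NeZero n := ⟨by omega⟩
  have hd' : (d : ℂ) ≠ 0 := by exact_mod_cast Complex.ofReal_ne_zero.mpr hd.ne'
  have hcc : ∀ i j : Fin n, i ≠ j → phi n (c i) (c j) = (d : ℂ) ^ 2 := by
    intro i j hij
    rcases hij.lt_or_gt with h | h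
    · exact h3 i j h
    · exact (phi_symm n (c i) (c j)).trans (h3 j i h)
  -- key dot products
  have hBvv : ∑ k, (a k - b k) * (a k - b k) = 0 := by
    have hm := master n a b a b
    rw [phi_self, phi_self, phi_symm n b a, h4] at hm
    linear_combination -hm / 2
  have hBvc : ∀ j : Fin n, ∑ k, (a k - b k) * (c j k - c 0 k) = 0 := by
    intro j
    have hm := master n a b (c j) (c 0)
    rw [h1 0, h2 j, h1 j, h2 0] at hm
    linear_combination -hm / 2
  have hdiag : ∀ i : Fin n, i ≠ 0 →
      ∑ k, (c i k - c 0 k) * (c i k - c 0 k) = (d : ℂ) ^ 2 := by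
    intro i hi
    have hm := master n (c i) (c 0) (c i) (c 0)
    rw [phi_self, phi_self, hcc i 0 hi, phi_symm n (c 0) (c i), hcc i 0 hi] at hm
    linear_combination -hm / 2
  have hoff : ∀ i j : Fin n, i ≠ 0 → j ≠ 0 → i ≠ j →
      ∑ k, (c i k - c 0 k) * (c j k - c 0 k) = (d : ℂ) ^ 2 / 2 := by
    intro i j hi hj hij
    have hm := master n (c i) (c 0) (c j) (c 0)
    rw [phi_self, hcc i 0 hi, phi_symm n (c 0) (c j), hcc j 0 hj, hcc i j hij] at hm
    linear_combination -hm / 2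
  -- the matrix argument
  set P : Matrix (Fin n) (Fin n) ℂ :=
    Matrix.of fun i k => if i = 0 then a k - b k else c i k - c 0 k with hPdef
  set G : Matrix (Fin n) (Fin n) ℂ :=
    Matrix.of fun i j => if i = 0 ∨ j = 0 then 0
      else if i = j then (d : ℂ) ^ 2 else (d : ℂ) ^ 2 / 2 with hGdef
  have hPG : P * Pᵀ = G := by
    ext i j
    rw [Matrix.mul_apply]
    simp only [hPdef, hGdef, Matrix.transpose_apply, Matrix.of_apply]
    by_cases hi : i = 0 <;> by_cases hj : j = 0 <;>
      simp only [hi, hj, eq_self_iff_true, if_true, if_false, true_or, or_true,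
        false_or, or_false]
    · exact hBvv
    · exact hBvc j
    · rw [Finset.sum_congr rfl (fun k _ => mul_comm (c i k - c 0 k) (a k - b k))]
      exact hBvc i
    · by_cases hij : i = j
      · subst hij
        rw [if_pos rfl]
        exact hdiag i hi
      · rw [if_neg hij]
        exact hoff i j hi hj hij
  have hdetG : G.det = 0 := by
    apply Matrix.det_eq_zero_of_row_eq_zero 0
    intro j
    simp [hGdef]
  have hdetP : P.det = 0 := by
    have h : P.det * P.det = 0 := by
      calc P.det * P.det = (P * Pᵀ).det := by rw [Matrix.det_mul, Matrix.det_transpose]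
        _ = 0 := by rw [hPG, hdetG]
    exact mul_self_eq_zero.mp h
  obtain ⟨t, ht0, htP⟩ := Matrix.exists_vecMul_eq_zero_iff.mpr hdetP
  have htG : t ᵥ* G = 0 := by
    rw [← hPG, ← Matrix.vecMul_vecMul, htP, Matrix.zero_vecMul]
  set S : ℂ := ∑ i ∈ Finset.univ.erase (0 : Fin n), t i with hSdef
  have hjt : ∀ j : Fin n, j ≠ 0 → t j = -S := by
    intro j hj
    have hrow := congrFun htG j
    rw [Pi.zero_apply] at hrow
    have hsum : (t ᵥ* G) j = ∑ i, t i * G i j := by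
      simp [Matrix.vecMul, dotProduct]
    rw [hsum] at hrow
    rw [← Finset.sum_erase_add _ _ (Finset.mem_univ (0 : Fin n))] at hrow
    have hG0 : G 0 j = 0 := by simp [hGdef]
    rw [hG0, mul_zero, add_zero] at hrow
    have hterm : ∀ i ∈ Finset.univ.erase (0 : Fin n),
        t i * G i j = t i * ((d : ℂ) ^ 2 / 2) + (if i = j then t i * ((d : ℂ) ^ 2 / 2) else 0) := by
      intro i hi
      have hi0 : i ≠ 0 := Finset.ne_of_mem_erase hi
      have : ¬ (i = 0 ∨ j = 0) := by tauto
      by_cases hij : i = j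
      · simp only [hGdef, Matrix.of_apply, if_neg this, if_pos hij]
        ring
      · simp only [hGdef, Matrix.of_apply, if_neg this, if_neg hij]
        ring
    rw [Finset.sum_congr rfl hterm, Finset.sum_add_distrib, Finset.sum_ite_eq'] at hrow
    have hjmem : j ∈ Finset.univ.erase (0 : Fin n) := Finset.mem_erase.mpr ⟨hj, Finset.mem_univ j⟩
    rw [if_pos hjmem, ← Finset.sum_mul] at hrow
    -- hrow : S * (d^2/2) + t j * (d^2/2) = 0
    have h2 : (S + t j) * ((d : ℂ) ^ 2 / 2) = 0 := by linear_combination hrow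
    have hd2 : ((d : ℂ) ^ 2 / 2) ≠ 0 := by
      apply div_ne_zero (pow_ne_zero 2 hd') two_ne_zero
    have h3' := (mul_eq_zero.mp h2).resolve_right hd2
    linear_combination h3'
  have hS : S = 0 := by
    have hcard : (Finset.univ.erase (0 : Fin n)).card = n - 1 := by
      simp [Finset.card_erase_of_mem]
    have hsum2 : S = ((n - 1 : ℕ) : ℂ) * (-S) := by
      conv_lhs => rw [hSdef]
      rw [Finset.sum_congr rfl (fun i hi => hjt i (Finset.ne_of_mem_erase hi)),
        Finset.sum_const, hcard, nsmul_eq_mul]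
    rw [Nat.cast_sub (show 1 ≤ n by omega), Nat.cast_one] at hsum2
    have hn0 : (n : ℂ) ≠ 0 := Nat.cast_ne_zero.mpr (by omega)
    have hnS : (n : ℂ) * S = 0 := by linear_combination hsum2
    exact (mul_eq_zero.mp hnS).resolve_left hn0
  have htj : ∀ j : Fin n, j ≠ 0 → t j = 0 := by
    intro j hj
    rw [hjt j hj, hS, neg_zero]
  have ht00 : t 0 ≠ 0 := by
    intro h
    apply ht0
    funext i
    by_cases hi : i = 0
    · rw [hi]; exact h
    · exact htj i hi
  funext k
  have hk := congrFun htP k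
  rw [Pi.zero_apply] at hk
  have hsum : (t ᵥ* P) k = ∑ i, t i * P i k := by
    simp [Matrix.vecMul, dotProduct]
  rw [hsum, ← Finset.sum_erase_add _ _ (Finset.mem_univ (0 : Fin n))] at hk
  rw [Finset.sum_eq_zero (fun i hi => by rw [htj i (Finset.ne_of_mem_erase hi), zero_mul]),
    zero_add] at hk
  have hP0 : P 0 k = a k - b k := by simp [hPdef]
  rw [hP0] at hk
  have := (mul_eq_zero.mp hk).resolve_left ht00
  linear_combination this
end

section
/- Let n ≥ 3. Define Dₙ as the set of d > 0 such that for all x, y ∈ ℝⁿ with |x−y| = d, there exists a finite set S ⊆ ℝⁿ containing x and y such that every map f: S → ℂⁿ preserving unit distance (i.e., φₙ(f(a),f(b)) = 1 whenever |a−b| = 1) satisfies φₙ(f(x),f(y)) = d². If d ∈ Dₙ, then √(2+2/n)·d ∈ Dₙ. -/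
/-- `f` preserves unit distance on the set `S`. -/
def UnitPreservingOn (n : ℕ) (S : Set (EuclideanSpace ℝ (Fin n)))
    (f : EuclideanSpace ℝ (Fin n) → (Fin n → ℂ)) : Prop :=
  ∀ a ∈ S, ∀ b ∈ S, dist a b = 1 → phi n (f a) (f b) = 1

/-- `d ∈ Dₙ`: `d > 0` and for all `x y` at distance `d` there is a finite set `S`
containing `x` and `y` such that every unit-distance preserving map `f : S → ℂⁿ`
satisfies `φₙ(f x, f y) = d²`. -/
def MemD (n : ℕ) (d : ℝ) : Prop :=
  0 < d ∧ ∀ x y : EuclideanSpace ℝ (Fin n), dist x y = d →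
    ∃ S : Finset (EuclideanSpace ℝ (Fin n)), x ∈ S ∧ y ∈ S ∧
      ∀ f : EuclideanSpace ℝ (Fin n) → (Fin n → ℂ),
        UnitPreservingOn n (↑S) f → phi n (f x) (f y) = (d : ℂ) ^ 2

open Matrix

lemma sub_dotProduct_sub_self {R ι : Type*} [CommRing R] [Fintype ι] (u v : ι → R) :
    (u - v) ⬝ᵥ (u - v) = u ⬝ᵥ u - 2 * (u ⬝ᵥ v) + v ⬝ᵥ v := by
  rw [sub_dotProduct, dotProduct_sub, dotProduct_sub, dotProduct_comm v u]; ring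

lemma dotProduct_eq_half_of_sub {K ι : Type*} [Field K] [CharZero K] [Fintype ι] {s t : K}
    {u w : ι → K} (hu : u ⬝ᵥ u = s) (hw : w ⬝ᵥ w = t) (huw : (u - w) ⬝ᵥ (u - w) = s) :
    u ⬝ᵥ w = t / 2 := by
  rw [sub_dotProduct_sub_self, hu, hw] at huw
  linear_combination -huw / 2

section Gram

variable {K ι : Type*} [Field K] [CharZero K] [Fintype ι] [DecidableEq ι] {s : K}
  {r : ι → ι → K}

lemma eq_zero_of_forall_dotProduct_eq_zero_of_gram (hs : s ≠ 0)
    (hr : ∀ i j, r i ⬝ᵥ r j = if i = j then s else s / 2) {z : ι → K}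
    (hz : ∀ i, r i ⬝ᵥ z = 0) : z = 0 := by
  have hgram : of r * (of r)ᵀ = (s / 2) • (1 + vecMulVec 1 1) := by
    ext i j
    rw [mul_apply', Matrix.smul_apply, Matrix.add_apply, one_apply, vecMulVec_apply]
    change r i ⬝ᵥ r j = _
    rw [hr]
    split_ifs <;> simp only [Pi.one_apply, mul_one, smul_eq_mul] <;> ring
  have hdet : (of r).det ≠ 0 := by
    intro h
    have hne : (s / 2) ^ Fintype.card ι * (1 + Fintype.card ι : K) ≠ 0 :=
      mul_ne_zero (pow_ne_zero _ (div_ne_zero hs two_ne_zero)) (by norm_cast; omega)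
    apply hne
    rw [← one_dotProduct_one, ← det_one_add_replicateCol_mul_replicateRow (ι := Unit),
      ← vecMulVec_eq, ← det_smul, ← hgram, det_mul, det_transpose, h, zero_mul]
  exact eq_zero_of_mulVec_eq_zero hdet (funext hz)

lemma dotProduct_sum_of_gram (hr : ∀ i j, r i ⬝ᵥ r j = if i = j then s else s / 2) (i : ι) :
    r i ⬝ᵥ ∑ j, r j = (Fintype.card ι + 1) * s / 2 := by
  have hsplit : ∀ j, r i ⬝ᵥ r j = s / 2 + if i = j then s / 2 else 0 := fun j => by
    rw [hr]; split_ifs <;> ring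
  rw [dotProduct_sum, Finset.sum_congr rfl fun j _ => hsplit j, Finset.sum_add_distrib,
    Finset.sum_ite_eq, if_pos (Finset.mem_univ _), Finset.sum_const, Finset.card_univ,
    nsmul_eq_mul]
  ring

lemma smul_eq_smul_sum_of_gram (hs : s ≠ 0)
    (hr : ∀ i j, r i ⬝ᵥ r j = if i = j then s else s / 2) {w : ι → K} {c : K}
    (hw : ∀ i, r i ⬝ᵥ w = c / 2) : ((Fintype.card ι + 1) * s) • w = c • ∑ i, r i := by
  rw [← sub_eq_zero]
  refine eq_zero_of_forall_dotProduct_eq_zero_of_gram hs hr fun i => ?_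
  rw [dotProduct_sub, dotProduct_smul, dotProduct_smul, hw, dotProduct_sum_of_gram hr,
    smul_eq_mul, smul_eq_mul]
  ring

theorem dotProduct_sub_self_eq_or_eq (hs : s ≠ 0) {a b : ι → K} {p : ι → ι → K}
    (hap : ∀ i, (a - p i) ⬝ᵥ (a - p i) = s) (hbp : ∀ i, (b - p i) ⬝ᵥ (b - p i) = s)
    (hpp : Pairwise fun i j => (p i - p j) ⬝ᵥ (p i - p j) = s) :
    (a - b) ⬝ᵥ (a - b) = (2 + 2 / Fintype.card ι) * s ∨ a = b := by
  set n : K := (Fintype.card ι : K)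
  set β := (a - b) ⬝ᵥ (a - b)
  set r : ι → ι → K := fun i => p i - a
  have hrr_self : ∀ i, r i ⬝ᵥ r i = s := fun i => by
    simp only [r, ← neg_sub a (p i), neg_dotProduct_neg, hap]
  have hrr : ∀ i j, r i ⬝ᵥ r j = if i = j then s else s / 2 := by
    intro i j
    split_ifs with hij
    · rw [hij, hrr_self]
    · exact dotProduct_eq_half_of_sub (hrr_self i) (hrr_self j) (by simpa [r] using hpp hij)
  have hww : (b - a) ⬝ᵥ (b - a) = β := by rw [← neg_sub a, neg_dotProduct_neg]
  have hrw : ∀ i, r i ⬝ᵥ (b - a) = β / 2 := fun i =>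
    dotProduct_eq_half_of_sub (hrr_self i) hww (by
      rw [← neg_sub, neg_dotProduct_neg]; simpa [r] using hbp i)
  have hwσ := smul_eq_smul_sum_of_gram hs hrr hrw
  have hσw : (∑ i, r i) ⬝ᵥ (b - a) = n * (β / 2) := by
    rw [sum_dotProduct, Finset.sum_congr rfl fun i _ => hrw i, Finset.sum_const,
      Finset.card_univ, nsmul_eq_mul]
  have hquad : β * ((n + 1) * s - n * β / 2) = 0 := by
    have := congrArg (· ⬝ᵥ (b - a)) hwσ
    simp only [smul_dotProduct, hww, hσw, smul_eq_mul] at this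
    linear_combination this
  rcases mul_eq_zero.1 hquad with h | h
  · right
    rw [h, zero_smul, smul_eq_zero_iff_right (mul_ne_zero (Nat.cast_add_one_ne_zero _) hs),
      sub_eq_zero] at hwσ
    exact hwσ.symm
  · left
    have hn : n ≠ 0 := by
      rintro hn
      simp [hn, hs] at h
    field_simp
    linear_combination -2 * h

end Gram

open Metric

theorem exists_dist_eq_dist_eq {E : Type*} [NormedAddCommGroup E] [NormedSpace ℝ E]
    (hE : 1 < Module.rank ℝ E) (x y : E) {d : ℝ} (hd₀ : 0 ≤ d) (hd : d ≤ 2 * dist x y) :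
    ∃ z, dist z x = dist y x ∧ dist y z = d := by
  have hy : y ∈ sphere x (dist y x) := mem_sphere.2 rfl
  have hy' : AffineIsometryEquiv.pointReflection ℝ x y ∈ sphere x (dist y x) :=
    mem_sphere.2 (AffineIsometryEquiv.dist_pointReflection_fixed x y)
  have hd' : d ∈ Set.Icc (dist y y) (dist y (AffineIsometryEquiv.pointReflection ℝ x y)) := by
    rw [dist_self, dist_comm, AffineIsometryEquiv.dist_pointReflection_self_real]
    exact ⟨hd₀, hd⟩
  exact (isConnected_sphere hE x dist_nonneg).isPreconnected.intermediate_value hy hy'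
    (f := dist y) (by fun_prop) hd'

section Orthonormal

variable {E ι : Type*} [NormedAddCommGroup E] [InnerProductSpace ℝ E] [Fintype ι] {v : ι → E}

open RealInnerProductSpace

theorem Orthonormal.exists_orthonormal_sum_eq (hv : Orthonormal ℝ v) {w : E}
    (hw : ‖∑ i, v i‖ = ‖w‖) : ∃ v' : ι → E, Orthonormal ℝ v' ∧ ∑ i, v' i = w :=
  ⟨(ℝ ∙ (∑ i, v i - w))ᗮ.reflection ∘ v, hv.comp_linearIsometryEquiv _, by
    simpa only [Function.comp_apply, ← map_sum] using Submodule.reflection_sub hw⟩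

theorem Orthonormal.inner_sum_right (hv : Orthonormal ℝ v) (i : ι) : ⟪v i, ∑ j, v j⟫ = 1 := by
  simpa using hv.inner_right_fintype (fun _ => (1 : ℝ)) i

theorem Orthonormal.norm_sum_sq (hv : Orthonormal ℝ v) : ‖∑ j, v j‖ ^ 2 = Fintype.card ι := by
  rw [← real_inner_self_eq_norm_sq, sum_inner]
  simp [hv.inner_sum_right]

theorem Orthonormal.norm_smul_add_smul_sum_sq (hv : Orthonormal ℝ v) (i : ι) (α β : ℝ) :
    ‖α • v i + β • ∑ j, v j‖ ^ 2 = α ^ 2 + 2 * α * β + Fintype.card ι * β ^ 2 := by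
  rw [norm_add_sq_real, norm_smul, norm_smul, real_inner_smul_left, real_inner_smul_right,
    hv.inner_sum_right, hv.norm_eq_one, mul_pow, mul_pow, hv.norm_sum_sq]
  simp only [Real.norm_eq_abs, sq_abs]
  ring

theorem Orthonormal.exists_orthonormal_smul_sum_eq [Nonempty ι] (hv : Orthonormal ℝ v) (u : E) :
    ∃ b : ι → E, Orthonormal ℝ b ∧
      ∃ k : ℝ, u = k • ∑ i, b i ∧ Fintype.card ι * k ^ 2 = ‖u‖ ^ 2 := by
  have hn : (0 : ℝ) < Fintype.card ι := Nat.cast_pos.2 Fintype.card_pos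
  rcases eq_or_ne u 0 with rfl | hu
  · exact ⟨v, hv, 0, by simp⟩
  have hnorm : ‖∑ i, v i‖ = ‖(√(Fintype.card ι) / ‖u‖) • u‖ := by
    rw [norm_smul, Real.norm_eq_abs, abs_of_pos (by positivity),
      div_mul_cancel₀ _ (norm_ne_zero_iff.2 hu), ← Real.sqrt_sq (norm_nonneg _), hv.norm_sum_sq]
  obtain ⟨b, hb, hσ⟩ := hv.exists_orthonormal_sum_eq hnorm
  refine ⟨b, hb, ‖u‖ / √(Fintype.card ι), ?_, ?_⟩
  · rw [hσ, smul_smul, div_mul_div_comm, mul_comm, div_self (by positivity), one_smul]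
  · rw [div_pow, Real.sq_sqrt hn.le]
    field_simp

theorem Orthonormal.exists_simplex_equidistant [Nonempty ι] (hv : Orthonormal ℝ v) {x y : E}
    {d : ℝ} (hd : 0 ≤ d) (hxy : dist x y = √(2 + 2 / Fintype.card ι) * d) :
    ∃ P : ι → E, (∀ i, dist x (P i) = d) ∧ (∀ i, dist y (P i) = d) ∧
      Pairwise fun i j => dist (P i) (P j) = d := by
  set n : ℝ := (Fintype.card ι : ℝ)
  have hn : 0 < n := Nat.cast_pos.2 Fintype.card_pos
  obtain ⟨b, hb, k, hyx, hk⟩ := hv.exists_orthonormal_smul_sum_eq (y - x)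
  set σ := ∑ i, b i
  rw [← dist_eq_norm', hxy, mul_pow, Real.sq_sqrt (by positivity)] at hk
  rw [eq_add_of_sub_eq' hyx]
  replace hk : n ^ 2 * k ^ 2 = 2 * (n + 1) * d ^ 2 := by
    rw [sq n, mul_assoc, hk]
    field_simp
  obtain ⟨c, hc⟩ : ∃ c : ℝ, c ^ 2 = d ^ 2 / 2 :=
    ⟨d / √2, by rw [div_pow, Real.sq_sqrt zero_le_two]⟩
  have hdist : ∀ z : E, ‖z‖ ^ 2 = d ^ 2 → ‖z‖ = d := fun z h =>
    (pow_left_inj₀ (norm_nonneg z) hd two_ne_zero).1 h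
  -- `P i` lies on the hyperplane through the midpoint of `x y` orthogonal to `σ ∥ y - x`,
  -- centred there, and `|P i - P j| = √2 c = d`.
  refine ⟨fun i => x + (c • b i + (k / 2 - c / n) • σ), fun i => ?_, fun i => ?_,
    fun i j hij => ?_⟩
  · rw [dist_eq_norm', add_sub_cancel_left]
    refine hdist _ ?_
    rw [hb.norm_smul_add_smul_sum_sq]
    field_simp
    linear_combination 4 * (n ^ 2 - n) * hc + n * hk
  · rw [dist_eq_norm',
      show x + (c • b i + (k / 2 - c / n) • σ) - (x + k • σ) = c • b i + (-k / 2 - c / n) • σ by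
        module]
    refine hdist _ ?_
    rw [hb.norm_smul_add_smul_sum_sq]
    field_simp
    linear_combination 4 * (n ^ 2 - n) * hc + n * hk
  · dsimp only
    rw [dist_eq_norm, show x + (c • b i + (k / 2 - c / n) • σ) -
      (x + (c • b j + (k / 2 - c / n) • σ)) = c • (b i - b j) by module]
    refine hdist _ ?_
    rw [norm_smul, mul_pow, norm_sub_sq_real, hb.norm_eq_one, hb.norm_eq_one,
      hb.inner_eq_zero hij]
    simp only [Real.norm_eq_abs, sq_abs, hc]
    ring

end Orthonormal

section Rigidity

variable {n : ℕ}

def DistSqPreservingOn (n : ℕ) (d : ℝ) (V : Set (EuclideanSpace ℝ (Fin n)))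
    (f : EuclideanSpace ℝ (Fin n) → (Fin n → ℂ)) : Prop :=
  ∀ a ∈ V, ∀ b ∈ V, dist a b = d → phi n (f a) (f b) = (d : ℂ) ^ 2

theorem phi_eq_dotProduct (x y : Fin n → ℂ) : phi n x y = (x - y) ⬝ᵥ (x - y) := by
  simp [phi, dotProduct, sq]

theorem phi_eq_of_phi_eq_or_eq {s : ℂ} (hs : s ≠ 0) {a b b' : Fin n → ℂ}
    (hab : phi n a b = (2 + 2 / n) * s ∨ a = b) (hab' : phi n a b' = (2 + 2 / n) * s ∨ a = b')
    (hbb' : phi n b b' = s) : phi n a b = (2 + 2 / n) * s := by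
  refine hab.resolve_right fun h => ?_
  subst h
  rcases hab' with h' | rfl
  · have hC : ((2 + 2 / n : ℝ) : ℂ) = (1 : ℝ) := by
      push_cast
      exact mul_right_cancel₀ hs (h'.symm.trans hbb' |>.trans (one_mul s).symm)
    linarith [Complex.ofReal_inj.1 hC, show (0 : ℝ) ≤ 2 / n by positivity]
  · exact hs (hbb'.symm.trans (by simp [phi]))

theorem UnitPreservingOn.mono {S T : Set (EuclideanSpace ℝ (Fin n))}
    {f : EuclideanSpace ℝ (Fin n) → (Fin n → ℂ)} (hST : S ⊆ T) (hf : UnitPreservingOn n T f) :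
    UnitPreservingOn n S f :=
  fun a ha b hb hab => hf a (hST ha) b (hST hb) hab

theorem MemD.exists_finset_superset {d : ℝ} (hd : MemD n d)
    (V : Finset (EuclideanSpace ℝ (Fin n))) :
    ∃ S : Finset (EuclideanSpace ℝ (Fin n)), V ⊆ S ∧
      ∀ f, UnitPreservingOn n S f → DistSqPreservingOn n d V f := by
  classical
  have hT : ∀ ab : EuclideanSpace ℝ (Fin n) × EuclideanSpace ℝ (Fin n),
      ∃ T : Finset (EuclideanSpace ℝ (Fin n)), dist ab.1 ab.2 = d →
        ∀ f, UnitPreservingOn n T f → phi n (f ab.1) (f ab.2) = (d : ℂ) ^ 2 := by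
    intro ab
    by_cases h : dist ab.1 ab.2 = d
    · obtain ⟨T, -, -, hT⟩ := hd.2 _ _ h
      exact ⟨T, fun _ => hT⟩
    · exact ⟨∅, fun h' => absurd h' h⟩
  choose T hT using hT
  refine ⟨V ∪ (V ×ˢ V).biUnion T, Finset.subset_union_left, fun f hf a ha b hb hab =>
    hT (a, b) hab f (hf.mono ?_)⟩
  exact_mod_cast (Finset.subset_biUnion_of_mem T (Finset.mk_mem_product ha hb)).trans
    Finset.subset_union_right

theorem DistSqPreservingOn.phi_eq_or_eq {d : ℝ} (hd : d ≠ 0) {V : Set (EuclideanSpace ℝ (Fin n))}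
    {f : EuclideanSpace ℝ (Fin n) → (Fin n → ℂ)} (hf : DistSqPreservingOn n d V f)
    {x y : EuclideanSpace ℝ (Fin n)} {P : Fin n → EuclideanSpace ℝ (Fin n)} (hx : x ∈ V)
    (hy : y ∈ V) (hP : ∀ i, P i ∈ V) (hxP : ∀ i, dist x (P i) = d) (hyP : ∀ i, dist y (P i) = d)
    (hPP : Pairwise fun i j => dist (P i) (P j) = d) :
    phi n (f x) (f y) = (2 + 2 / n) * (d : ℂ) ^ 2 ∨ f x = f y := by
  simpa [phi_eq_dotProduct] using dotProduct_sub_self_eq_or_eq (p := fun i => f (P i))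
    (pow_ne_zero 2 (Complex.ofReal_ne_zero.2 hd))
    (fun i => (phi_eq_dotProduct _ _).symm.trans (hf _ hx _ (hP i) (hxP i)))
    (fun i => (phi_eq_dotProduct _ _).symm.trans (hf _ hy _ (hP i) (hyP i)))
    (fun i j hij => (phi_eq_dotProduct _ _).symm.trans (hf _ (hP i) _ (hP j) (hPP hij)))

end Rigidity

theorem stmt16 (n : ℕ) (hn : 3 ≤ n) (d : ℝ) (hd : MemD n d) :
    MemD n (Real.sqrt (2 + 2 / n) * d) := by
  have : Nonempty (Fin n) := ⟨⟨0, by omega⟩⟩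
  have hv := EuclideanSpace.orthonormal_single (𝕜 := ℝ) (ι := Fin n)
  have hrank : 1 < Module.rank ℝ (EuclideanSpace ℝ (Fin n)) :=
    Module.one_lt_rank_of_one_lt_finrank (by rw [finrank_euclideanSpace_fin]; omega)
  have hsqrt : 1 ≤ √(2 + 2 / n) :=
    Real.one_le_sqrt.2 (by linarith [show (0 : ℝ) ≤ 2 / n by positivity])
  refine ⟨by have := hd.1; positivity, fun x y hxy => ?_⟩
  obtain ⟨P, hxP, hyP, hPP⟩ := hv.exists_simplex_equidistant hd.1.le (by simpa using hxy)
  obtain ⟨y', hxy', hyy'⟩ := exists_dist_eq_dist_eq hrank x y hd.1.le (by nlinarith [hd.1, hsqrt])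
  obtain ⟨Q, hxQ, hy'Q, hQQ⟩ :=
    hv.exists_simplex_equidistant hd.1.le (by rw [dist_comm, hxy', dist_comm]; simpa using hxy)
  obtain ⟨S, hVS, hS⟩ := hd.exists_finset_superset
    ({x, y, y'} ∪ Finset.univ.image P ∪ Finset.univ.image Q)
  refine ⟨S, hVS (by simp), hVS (by simp), fun f hf => ?_⟩
  have hfV := hS f hf
  rw [Complex.ofReal_mul, mul_pow, ← Complex.ofReal_pow, Real.sq_sqrt (by positivity)]
  push_cast
  exact phi_eq_of_phi_eq_or_eq (pow_ne_zero 2 (Complex.ofReal_ne_zero.2 hd.1.ne'))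
    (hfV.phi_eq_or_eq hd.1.ne' (by simp) (by simp) (by simp) hxP hyP hPP)
    (hfV.phi_eq_or_eq hd.1.ne' (by simp) (by simp) (by simp) hxQ hy'Q hQQ)
    (hfV _ (by simp) _ (by simp) hyy')
end
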